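/- For every integer n ≥ 2, let H be the set consisting of the n−1 edges {w_n, v_i} for 1 ≤ i ≤ n−1 together with the n−1 edges {v_n, w_i} for 2 ≤ i ≤ n. Then |H| = 2(n−1), every edge of H is good for G_n, and χ_r(G_n ∪ H) = χ_r(G_n) = n+1. -/

import Mathlib

/-!
Each copy of `Kₙ` is an `n`-clique, so in an `n`-ranking of `G_n` both cliques contain a vertex
labelled `n`; as `G_n` is connected, a path joining them has no larger label, hence
`χᵣ(G_n) ≥ n + 1`. Conversely, label `wᵢ` and `vᵢ` by `i`, except `vₙ` by `n + 1`. Equal labels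
only occur on pairs `wᵢ, vᵢ` with `i < n`, and every edge of `G_n ∪ H` between the two cliques
meets `wₙ` or `vₙ`, so the cut between the cliques separates such a pair by a larger label. This
`(n + 1)`-ranking of `G_n ∪ H` restricts to every graph between `G_n` and `G_n ∪ H`.
-/

open SimpleGraph

/-- `f` is a `k`-ranking of `G`: labels lie in `{1,…,k}` and whenever two distinct
vertices get the same label, every path connecting them contains a vertex of
strictly larger label. -/
def IsRanking {V : Type*} (G : SimpleGraph V) (k : ℕ) (f : V → ℕ) : Prop :=
  (∀ v, 1 ≤ f v ∧ f v ≤ k) ∧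
  ∀ u v, u ≠ v → f u = f v → ∀ p : G.Walk u v, p.IsPath → ∃ w ∈ p.support, f u < f w

/-- The rank number `χᵣ(G)`: the least `k` such that `G` admits a `k`-ranking. -/
noncomputable def rankNumber {V : Type*} (G : SimpleGraph V) : ℕ :=
  sInf {k | ∃ f : V → ℕ, IsRanking G k f}

/-- An edge `e ∉ E(G)` is good for `G` if adding it does not change the rank number. -/
def goodEdge {V : Type*} (G : SimpleGraph V) (e : Sym2 V) : Prop :=
  rankNumber (G ⊔ SimpleGraph.fromEdgeSet {e}) = rankNumber G

/-- `G_n`: two disjoint copies of the complete graph `K_n`, with vertex sets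
`W = {w_1, …, w_n}` (the left summand, `wᵢ = Sum.inl ⟨i - 1, _⟩`) and
`V = {v_1, …, v_n}` (the right summand, `vᵢ = Sum.inr ⟨i - 1, _⟩`), joined by the
single edge `w_1 v_n`. -/
def twoCliques (n : ℕ) : SimpleGraph (Fin n ⊕ Fin n) :=
  SimpleGraph.fromRel (fun a b =>
    (∃ i j : Fin n, a = Sum.inl i ∧ b = Sum.inl j) ∨
    (∃ i j : Fin n, a = Sum.inr i ∧ b = Sum.inr j) ∨
    (∃ i j : Fin n, i.val = 0 ∧ j.val = n - 1 ∧ a = Sum.inl i ∧ b = Sum.inr j))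

namespace IsRanking

variable {V : Type*} {G G' : SimpleGraph V} {k : ℕ} {f : V → ℕ}

theorem anti (h : G ≤ G') (hf : IsRanking G' k f) : IsRanking G k f := by
  refine ⟨hf.1, fun u v huv hfuv p hp => ?_⟩
  have he : ∀ e ∈ p.edges, e ∈ G'.edgeSet := fun e hep =>
    edgeSet_mono h (p.edges_subset_edgeSet hep)
  simpa using hf.2 u v huv hfuv (p.transfer G' he) (hp.transfer he)

theorem mono {k' : ℕ} (hk : k ≤ k') (hf : IsRanking G k f) : IsRanking G k' f :=
  ⟨fun v => ⟨(hf.1 v).1, (hf.1 v).2.trans hk⟩, hf.2⟩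

theorem ne_of_adj (hf : IsRanking G k f) {u v : V} (h : G.Adj u v) : f u ≠ f v := by
  intro huv
  obtain ⟨w, hw, hlt⟩ := hf.2 u v h.ne huv (h.toWalk) (by simpa using h.ne)
  simp only [Adj.toWalk, Walk.support_cons, Walk.support_nil, List.mem_cons,
    List.not_mem_nil, or_false] at hw
  rcases hw with rfl | rfl <;> omega

theorem injOn_of_isClique (hf : IsRanking G k f) {s : Set V} (hs : G.IsClique s) :
    Set.InjOn f s := fun _ hu _ hv huv => by_contra fun h => hf.ne_of_adj (hs hu hv h) huv

theorem exists_eq_of_isNClique (hf : IsRanking G k f) {s : Finset V} (hs : G.IsNClique k s)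
    (hk : 0 < k) : ∃ v ∈ s, f v = k := by
  have hsub : s.image f ⊆ Finset.Icc 1 k := fun _ hx => by
    obtain ⟨v, -, rfl⟩ := Finset.mem_image.mp hx
    exact Finset.mem_Icc.mpr (hf.1 v)
  have hcard : (Finset.Icc 1 k).card ≤ (s.image f).card := by
    rw [Finset.card_image_of_injOn (hf.injOn_of_isClique hs.isClique), hs.card_eq]; simp
  have hmem : k ∈ s.image f :=
    Finset.eq_of_subset_of_card_le hsub hcard ▸ Finset.right_mem_Icc.mpr hk
  simpa using hmem

theorem not_reachable (hf : IsRanking G k f) {u v : V} (huv : u ≠ v) (hu : f u = k)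
    (hv : f v = k) : ¬ G.Reachable u v := by
  classical
  rintro ⟨p⟩
  obtain ⟨w, -, hlt⟩ := hf.2 u v huv (hu.trans hv.symm) p.toPath p.toPath.2
  have := (hf.1 w).2
  omega

end IsRanking

theorem isRanking_of_forall_cut {V : Type*} {G : SimpleGraph V} {k : ℕ} {f : V → ℕ}
    (hf : ∀ v, 1 ≤ f v ∧ f v ≤ k)
    (hcut : ∀ u v, u ≠ v → f u = f v → ∃ S : Set V, u ∈ S ∧ v ∉ S ∧
      ∀ x y, G.Adj x y → x ∈ S → y ∉ S → f u < f x ∨ f u < f y) :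
    IsRanking G k f := by
  refine ⟨hf, fun u v huv hfuv p _ => ?_⟩
  obtain ⟨S, hu, hv, hS⟩ := hcut u v huv hfuv
  obtain ⟨d, hd, hx, hy⟩ := p.exists_boundary_dart S hu hv
  rcases hS _ _ d.adj hx hy with h | h
  · exact ⟨_, p.dart_fst_mem_support_of_mem_darts hd, h⟩
  · exact ⟨_, p.dart_snd_mem_support_of_mem_darts hd, h⟩

theorem rankNumber_eq_of_le_of_le {V : Type*} {G₁ G G₂ : SimpleGraph V} {k : ℕ} {f : V → ℕ}
    (h₁ : G₁ ≤ G) (h₂ : G ≤ G₂) (hf : IsRanking G₂ (k + 1) f)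
    (hlow : ∀ g, ¬ IsRanking G₁ k g) : rankNumber G = k + 1 := by
  refine le_antisymm (Nat.sInf_le ⟨f, hf.anti h₂⟩) (le_csInf ⟨_, f, hf.anti h₂⟩ ?_)
  rintro m ⟨g, hg⟩
  by_contra! hm
  exact hlow g ((hg.anti h₁).mono (by omega))

section TwoCliques

variable {n : ℕ}

@[simp] theorem twoCliques_adj_inl_inl {i j : Fin n} :
    (twoCliques n).Adj (.inl i) (.inl j) ↔ i ≠ j := by simp [twoCliques]

@[simp] theorem twoCliques_adj_inr_inr {i j : Fin n} :
    (twoCliques n).Adj (.inr i) (.inr j) ↔ i ≠ j := by simp [twoCliques]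

@[simp] theorem twoCliques_adj_inl_inr {i j : Fin n} :
    (twoCliques n).Adj (.inl i) (.inr j) ↔ i.val = 0 ∧ j.val = n - 1 := by simp [twoCliques]

theorem twoCliques_isNClique_inl : (twoCliques n).IsNClique n (Finset.univ.map .inl) :=
  ⟨fun x hx y hy hxy => by aesop, by simp⟩

theorem twoCliques_isNClique_inr : (twoCliques n).IsNClique n (Finset.univ.map .inr) :=
  ⟨fun x hx y hy hxy => by aesop, by simp⟩

theorem twoCliques_preconnected (hn : 0 < n) : (twoCliques n).Preconnected := by
  have hw₁ : ∀ x, (twoCliques n).Reachable (.inl ⟨0, hn⟩) x := by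
    rintro (i | j)
    · obtain rfl | h := eq_or_ne ⟨0, hn⟩ i
      · rfl
      · exact (twoCliques_adj_inl_inl.mpr h).reachable
    · have hvₙ : (twoCliques n).Reachable (.inl ⟨0, hn⟩) (.inr ⟨n - 1, by omega⟩) :=
        (twoCliques_adj_inl_inr.mpr ⟨rfl, rfl⟩).reachable
      obtain rfl | h := eq_or_ne ⟨n - 1, by omega⟩ j
      · exact hvₙ
      · exact hvₙ.trans (twoCliques_adj_inr_inr.mpr h).reachable
  exact fun x y => (hw₁ x).symm.trans (hw₁ y)

theorem twoCliques_not_isRanking (hn : 0 < n) (f : Fin n ⊕ Fin n → ℕ) :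
    ¬ IsRanking (twoCliques n) n f := by
  intro hf
  obtain ⟨u, hu, hfu⟩ := hf.exists_eq_of_isNClique twoCliques_isNClique_inl hn
  obtain ⟨v, hv, hfv⟩ := hf.exists_eq_of_isNClique twoCliques_isNClique_inr hn
  have huv : u ≠ v := by aesop
  exact hf.not_reachable huv hfu hfv (twoCliques_preconnected hn u v)

def twoCliquesLabel (n : ℕ) : Fin n ⊕ Fin n → ℕ :=
  Sum.elim (fun i => i.val + 1) (fun j => if j.val = n - 1 then n + 1 else j.val + 1)

theorem twoCliquesLabel_mem_Icc (x : Fin n ⊕ Fin n) :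
    1 ≤ twoCliquesLabel n x ∧ twoCliquesLabel n x ≤ n + 1 := by
  rcases x with i | i <;> simp only [twoCliquesLabel, Sum.elim_inl, Sum.elim_inr] <;> grind

theorem isLeft_ne_of_twoCliquesLabel_eq {x y : Fin n ⊕ Fin n} (hxy : x ≠ y)
    (h : twoCliquesLabel n x = twoCliquesLabel n y) :
    x.isLeft ≠ y.isLeft ∧ twoCliquesLabel n x < n := by
  rcases x with i | i <;> rcases y with j | j <;>
    simp only [twoCliquesLabel, Sum.elim_inl, Sum.elim_inr, Sum.isLeft_inl, Sum.isLeft_inr,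
      ne_eq, Sum.inl.injEq, Sum.inr.injEq, Fin.ext_iff] at hxy h ⊢ <;> grind

theorem le_twoCliquesLabel_of_adj {H : Set (Sym2 (Fin n ⊕ Fin n))}
    (hH : ∀ e ∈ H, ∃ i : Fin n, i.val = n - 1 ∧ (.inl i ∈ e ∨ .inr i ∈ e))
    {x y : Fin n ⊕ Fin n} (h : (twoCliques n ⊔ fromEdgeSet H).Adj x y)
    (hxy : x.isLeft ≠ y.isLeft) : n ≤ twoCliquesLabel n x ∨ n ≤ twoCliquesLabel n y := by
  rcases h with h | ⟨he, -⟩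
  · rcases x with i | i <;> rcases y with j | j <;>
      simp only [Sum.isLeft_inl, Sum.isLeft_inr, ne_eq, not_true_eq_false] at hxy
    · simp [twoCliquesLabel, (twoCliques_adj_inl_inr.mp h).2]
    · simp [twoCliquesLabel, (twoCliques_adj_inl_inr.mp h.symm).2]
  · obtain ⟨i, hi, hx | hx⟩ := hH _ he <;> rcases Sym2.mem_iff.mp hx with rfl | rfl <;>
      simp [twoCliquesLabel, hi] <;> omega

theorem isRanking_twoCliquesLabel {H : Set (Sym2 (Fin n ⊕ Fin n))}
    (hH : ∀ e ∈ H, ∃ i : Fin n, i.val = n - 1 ∧ (.inl i ∈ e ∨ .inr i ∈ e)) :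
    IsRanking (twoCliques n ⊔ fromEdgeSet H) (n + 1) (twoCliquesLabel n) := by
  refine isRanking_of_forall_cut twoCliquesLabel_mem_Icc fun u v huv huv' => ?_
  obtain ⟨hside, hlt⟩ := isLeft_ne_of_twoCliquesLabel_eq huv huv'
  refine ⟨{x | x.isLeft = u.isLeft}, rfl, Ne.symm hside, fun x y hadj hx hy => ?_⟩
  have := le_twoCliquesLabel_of_adj hH hadj (fun h => hy (h ▸ hx : y.isLeft = u.isLeft))
  omega

theorem ncard_setOf_exists_eq_mk {α V : Type*} {P : α → Prop} {g : α → V}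
    (hg : Function.Injective g) (a : V) :
    {e | ∃ i, P i ∧ e = s(a, g i)}.ncard = {i | P i}.ncard := by
  have : {e | ∃ i, P i ∧ e = s(a, g i)} = (fun i => s(a, g i)) '' {i | P i} := by
    ext; simp [eq_comm]
  rw [this, Set.ncard_image_of_injective _ fun i j h => hg (Sym2.congr_right.mp h)]

def hubEdges (n : ℕ) (hn : 2 ≤ n) : Set (Sym2 (Fin n ⊕ Fin n)) :=
  {e | ∃ i : Fin n, i.val ≤ n - 2 ∧
      e = s(Sum.inl ⟨n - 1, Nat.sub_one_lt_of_lt hn⟩, Sum.inr i)} ∪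
    {e | ∃ i : Fin n, 1 ≤ i.val ∧ e = s(Sum.inr ⟨n - 1, Nat.sub_one_lt_of_lt hn⟩, Sum.inl i)}

theorem ncard_hubEdges (hn : 2 ≤ n) : (hubEdges n hn).ncard = 2 * (n - 1) := by
  have hle : {i : Fin n | i.val ≤ n - 2}.ncard = n - 1 := by
    have : {i : Fin n | i.val ≤ n - 2} = Set.Iic ⟨n - 2, by omega⟩ := by ext; simp [Fin.le_def]
    rw [this, ← Finset.coe_Iic, Set.ncard_coe_finset, Fin.card_Iic, Fin.val_mk]
    omega
  have hge : {i : Fin n | 1 ≤ i.val}.ncard = n - 1 := by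
    have : {i : Fin n | 1 ≤ i.val} = Set.Ici ⟨1, by omega⟩ := by ext; simp [Fin.le_def]
    rw [this, ← Finset.coe_Ici, Set.ncard_coe_finset, Fin.card_Ici]
  rw [hubEdges, Set.ncard_union_eq, ncard_setOf_exists_eq_mk Sum.inr_injective,
    ncard_setOf_exists_eq_mk Sum.inl_injective, hle, hge]
  · omega
  rw [Set.disjoint_left]
  rintro _ ⟨i, hi, rfl⟩ ⟨j, -, h⟩
  simp only [Sym2.eq_iff, reduceCtorEq, false_and, Sum.inl.injEq, Sum.inr.injEq, false_or] at h
  have := congrArg Fin.val h.2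
  simp only at this
  omega

theorem hubEdges_incident (hn : 2 ≤ n) :
    ∀ e ∈ hubEdges n hn, ∃ i : Fin n, i.val = n - 1 ∧ (.inl i ∈ e ∨ .inr i ∈ e) := by
  rintro _ (⟨i, -, rfl⟩ | ⟨i, -, rfl⟩)
  · exact ⟨_, rfl, .inl (Sym2.mem_mk_left _ _)⟩
  · exact ⟨_, rfl, .inr (Sym2.mem_mk_left _ _)⟩

end TwoCliques

/-- for `n ≥ 2`, let `H` consist of the `n - 1` edges `{w_n, v_i}` for
`1 ≤ i ≤ n - 1` together with the `n - 1` edges `{v_n, w_i}` for `2 ≤ i ≤ n` (here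
`wᵢ = Sum.inl ⟨i - 1, _⟩` and `vᵢ = Sum.inr ⟨i - 1, _⟩`). Then `|H| = 2(n - 1)`, every
edge of `H` is good for `G_n`, and `χᵣ(G_n ∪ H) = χᵣ(G_n) = n + 1`. -/
theorem twoCliques_good_edge_set (n : ℕ) (hn : 2 ≤ n) :
    ∀ H : Set (Sym2 (Fin n ⊕ Fin n)),
      H = {e | ∃ i : Fin n, i.val ≤ n - 2 ∧
              e = s(Sum.inl ⟨n - 1, by omega⟩, Sum.inr i)} ∪
          {e | ∃ i : Fin n, 1 ≤ i.val ∧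
              e = s(Sum.inr ⟨n - 1, by omega⟩, Sum.inl i)} →
      H.ncard = 2 * (n - 1) ∧
      (∀ e ∈ H, goodEdge (twoCliques n) e) ∧
      rankNumber ((twoCliques n) ⊔ SimpleGraph.fromEdgeSet H) = n + 1 ∧
      rankNumber (twoCliques n) = n + 1 := by
  rintro H rfl
  have hf := isRanking_twoCliquesLabel (hubEdges_incident hn)
  have hlow := twoCliques_not_isRanking (n := n) (by omega)
  have hG : rankNumber (twoCliques n) = n + 1 :=
    rankNumber_eq_of_le_of_le le_rfl le_sup_left hf hlow
  refine ⟨ncard_hubEdges hn, fun e he => ?_,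
    rankNumber_eq_of_le_of_le le_sup_left le_rfl hf hlow, hG⟩
  rw [goodEdge, hG]
  exact rankNumber_eq_of_le_of_le le_sup_left
    (sup_le_sup_left (fromEdgeSet_mono (Set.singleton_subset_iff.mpr he)) _) hf hlow
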